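/- Let M ≥ N ≥ k+1 ≥ 2 and let J ⊆ {k+2,…,N} with |J| = ℓ ≥ 1 and ℓ ≤ k. Then there exists an F-linear operator A on F[z_1,…,z_M] such that for every polynomial f ∈ F[z_1,…,z_M] that is symmetric in the variables z_1,…,z_N: [Ñ_{k+1}, D_{k+1−ℓ,J}] f = A ( Ñ_{k+1} f ). -/

import Mathlib

open MvPolynomial Finset

section CSDefs

variable {F : Type*} [Field F] [CharZero F]

/-- Exact division in a polynomial ring: `divExact d f = f / d` when `d ∣ f`, junk otherwise. -/
noncomputable def divExact {σ : Type*} (d f : MvPolynomial σ F) : MvPolynomial σ F := by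
  classical exact if h : ∃ c, f = d * c then h.choose else 0

/-- The exchange operator `K_{ij}` permuting the variables `z_i` and `z_j`. -/
noncomputable def Kswap {N : ℕ} (i j : Fin N) (f : MvPolynomial (Fin N) F) :
    MvPolynomial (Fin N) F :=
  rename (Equiv.swap i j) f

/-- The Dunkl operator `∇_i = ∂_i + β ∑_{j ≠ i} (z_i - z_j)⁻¹ (1 - K_{ij})`. -/
noncomputable def nabla {N : ℕ} (β : F) (i : Fin N) (f : MvPolynomial (Fin N) F) :
    MvPolynomial (Fin N) F :=
  pderiv i f + β • ∑ j ∈ Finset.univ.erase i, divExact (X i - X j) (f - Kswap i j f)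

/-- `D_i = z_i ∇_i`. -/
noncomputable def Dop {N : ℕ} (β : F) (i : Fin N) (f : MvPolynomial (Fin N) F) :
    MvPolynomial (Fin N) F :=
  X i * nabla β i f

/-- `(D_{j₁} + kβ)(D_{j₂} + (k+1)β) ⋯` applied along a list of indices. -/
noncomputable def Dlist {N : ℕ} (β : F) :
    ℕ → List (Fin N) → MvPolynomial (Fin N) F → MvPolynomial (Fin N) F
  | _, [], f => f
  | k, j :: rest, f => Dop β j (Dlist β (k + 1) rest f) + ((k : F) * β) • Dlist β (k + 1) rest f

/-- `D_{k,J} = (D_{j₁} + kβ)(D_{j₂} + (k+1)β) ⋯ (D_{j_ℓ} + (k+ℓ-1)β)` for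
`J = {j₁ < j₂ < … < j_ℓ}`. -/
noncomputable def DJ {N : ℕ} (β : F) (k : ℕ) (J : Finset (Fin N))
    (f : MvPolynomial (Fin N) F) : MvPolynomial (Fin N) F :=
  Dlist β k (J.sort (· ≤ ·)) f

/-- `z_J = ∏_{i ∈ J} z_i`. -/
noncomputable def zJ {N : ℕ} (J : Finset (Fin N)) : MvPolynomial (Fin N) F := ∏ i ∈ J, X i

/-- The creation operator `B⁺_{i,J} = ∑_{J' ⊆ J, |J'| = i} z_{J'} D_{1,J'}`. -/
noncomputable def Bplus {N : ℕ} (β : F) (i : ℕ) (J : Finset (Fin N))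
    (f : MvPolynomial (Fin N) F) : MvPolynomial (Fin N) F :=
  ∑ J' ∈ J.powersetCard i, zJ J' * DJ β 1 J' f

/-- `A_{ij} = ((z_i+z_j)/(z_i-z_j))(z_i ∂_i - z_j ∂_j)`. -/
noncomputable def Aop {N : ℕ} (i j : Fin N) (f : MvPolynomial (Fin N) F) :
    MvPolynomial (Fin N) F :=
  divExact (X i - X j) ((X i + X j) * (X i * pderiv i f - X j * pderiv j f))

/-- `H^{(S)} = ∑_{i ∈ S} (z_i ∂_i)² + β ∑_{i<j, i,j ∈ S} A_{ij}`. -/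
noncomputable def Hop {N : ℕ} (β : F) (S : Finset (Fin N)) (f : MvPolynomial (Fin N) F) :
    MvPolynomial (Fin N) F :=
  ∑ i ∈ S, X i * pderiv i (X i * pderiv i f)
    + β • ∑ i ∈ S, ∑ j ∈ S.filter (fun j => i < j), Aop i j f

/-- A polynomial is symmetric in the variables indexed by `S`. -/
def SymmOn {N : ℕ} (S : Finset (Fin N)) (f : MvPolynomial (Fin N) F) : Prop :=
  ∀ i ∈ S, ∀ j ∈ S, rename (Equiv.swap i j) f = f

/-- `phiCS β N lam i = (B⁺_i)^{λ_i - λ_{i+1}} ⋯ (B⁺_1)^{λ_1 - λ_2} · 1`,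
where `lam` is 0-indexed: `lam (j-1) = λ_j`. -/
noncomputable def phiCS (β : F) (N : ℕ) (lam : ℕ → ℕ) : ℕ → MvPolynomial (Fin N) F
  | 0 => 1
  | i + 1 => (fun f => Bplus β (i + 1) Finset.univ f)^[lam i - lam (i + 1)] (phiCS β N lam i)

/-- The monomial symmetric polynomial attached to an exponent vector. -/
noncomputable def msym (N : ℕ) (lam : Fin N → ℕ) : MvPolynomial (Fin N) F := by
  classical
  exact ∑ v ∈ (Finset.univ : Finset (Equiv.Perm (Fin N))).image
      (fun σ => fun i => lam (σ i)), ∏ i, X i ^ v i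

/-- `𝐷̂_i = D_i + β(i-1) - β ∑_{j<i} (1 - K_{ij})` (0-indexed: `i-1` becomes `i`). -/
noncomputable def Dhat {N : ℕ} (β : F) (i : Fin N) (f : MvPolynomial (Fin N) F) :
    MvPolynomial (Fin N) F :=
  Dop β i f + (β * ((i : ℕ) : F)) • f
    - β • ∑ j ∈ Finset.univ.filter (fun j => j < i), (f - Kswap i j f)

end CSDefs


/-!
The Dunkl operators commute, and `∇_i z_j = z_j ∇_i - β K_{ij}` for `i ≠ j`; hence
`[D_i, D_j] = β K_{ij} (D_i - D_j)`, which on a `K_{ij}`-invariant polynomial `h` is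
`β (D_j - D_i) h = β (K_{ij} - 1) D_i h`. Moving one factor `D_j + cβ` of `D_{c,J}` through
`Ñ = D_{0,L₀}`, where `j ∉ L₀` and `g` is invariant under every `K_{ij}` with `i ∈ L₀`, therefore
gives `[Ñ, D_j] g = β ∑_{i ∈ L₀} (K_{ij} - 1) Ñ g`, an operator applied to `Ñ g`. Induction on the
factors of `D_{c,J}` assembles the operator `A`.
-/

section DivExact

variable {σ F : Type*} [Field F] {d f : MvPolynomial σ F}

theorem divExact_eq_of_mul_eq {c : MvPolynomial σ F} (hd : d ≠ 0) (h : d * c = f) :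
    divExact d f = c := by
  classical
  have hex : ∃ c', f = d * c' := ⟨c, h.symm⟩
  rw [divExact, dif_pos hex]
  exact mul_left_cancel₀ hd (hex.choose_spec.symm.trans h.symm)

theorem mul_divExact (h : d ∣ f) : d * divExact d f = f := by
  obtain ⟨c, rfl⟩ := h
  rcases eq_or_ne d 0 with rfl | hd
  · simp
  · rw [divExact_eq_of_mul_eq hd rfl]

end DivExact

section Dunkl

variable {F : Type*} [Field F] {M : ℕ} {i j m : Fin M}

local notation "Pol" => MvPolynomial (Fin M) F

theorem Kswap_add (f g : Pol) : Kswap i j (f + g) = Kswap i j f + Kswap i j g := map_add _ _ _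

theorem Kswap_sub (f g : Pol) : Kswap i j (f - g) = Kswap i j f - Kswap i j g := map_sub _ _ _

theorem Kswap_mul (f g : Pol) : Kswap i j (f * g) = Kswap i j f * Kswap i j g := map_mul _ _ _

theorem Kswap_smul (c : F) (f : Pol) : Kswap i j (c • f) = c • Kswap i j f :=
  map_smul (rename (Equiv.swap i j)) c f

theorem Kswap_X : Kswap i j (X m : Pol) = X (Equiv.swap i j m) := rename_X _ _

theorem Kswap_C (a : F) : Kswap i j (C a : Pol) = C a := rename_C _ _

theorem Kswap_comm (i j : Fin M) (f : Pol) : Kswap i j f = Kswap j i f := by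
  rw [Kswap, Kswap, Equiv.swap_comm]

theorem rename_Kswap (σ : Equiv.Perm (Fin M)) (i j : Fin M) (f : Pol) :
    rename σ (Kswap i j f) = Kswap (σ i) (σ j) (rename σ f) := by
  simp only [Kswap, rename_rename]
  congr 1
  ext x
  simp [Equiv.swap_apply_apply]

theorem X_sub_X_dvd_sub_Kswap (i j : Fin M) (f : Pol) : X i - X j ∣ f - Kswap i j f := by
  let π := Ideal.Quotient.mkₐ F (Ideal.span {(X i - X j : Pol)})
  have hπ : π.comp (rename (Equiv.swap i j)) = π := by
    have hij : π (X i) = π (X j) := by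
      simp [π, Ideal.Quotient.mkₐ_eq_mk, Ideal.Quotient.eq]
    ext m
    simp only [AlgHom.comp_apply, rename_X, Equiv.swap_apply_def]
    split_ifs with hmi hmj
    · rw [hmi, hij]
    · rw [hmj, hij]
    · rfl
  rw [← Ideal.mem_span_singleton, ← Ideal.Quotient.eq, ← Ideal.Quotient.mkₐ_eq_mk F]
  exact (AlgHom.congr_fun hπ f).symm

noncomputable def divDiff (i j : Fin M) (f : Pol) : Pol :=
  divExact (X i - X j) (f - Kswap i j f)

theorem X_sub_X_mul_divDiff (i j : Fin M) (f : Pol) :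
    (X i - X j) * divDiff i j f = f - Kswap i j f :=
  mul_divExact (X_sub_X_dvd_sub_Kswap i j f)

theorem divDiff_eq_of_mul_eq {f c : Pol} (hij : i ≠ j) (h : (X i - X j) * c = f - Kswap i j f) :
    divDiff i j f = c :=
  divExact_eq_of_mul_eq (sub_ne_zero.2 (X_injective.ne hij)) h

theorem divDiff_add (hij : i ≠ j) (f g : Pol) :
    divDiff i j (f + g) = divDiff i j f + divDiff i j g :=
  divDiff_eq_of_mul_eq hij (by
    rw [mul_add, X_sub_X_mul_divDiff, X_sub_X_mul_divDiff, Kswap_add]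
    ring)

theorem divDiff_smul (hij : i ≠ j) (c : F) (f : Pol) : divDiff i j (c • f) = c • divDiff i j f :=
  divDiff_eq_of_mul_eq hij (by rw [mul_smul_comm, X_sub_X_mul_divDiff, Kswap_smul, smul_sub])

theorem divDiff_mul (hij : i ≠ j) (f g : Pol) :
    divDiff i j (f * g) = f * divDiff i j g + divDiff i j f * Kswap i j g :=
  divDiff_eq_of_mul_eq hij (by
    rw [Kswap_mul]
    linear_combination f * X_sub_X_mul_divDiff i j g + Kswap i j g * X_sub_X_mul_divDiff i j f)

theorem divDiff_C (hij : i ≠ j) (a : F) : divDiff i j (C a : Pol) = 0 :=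
  divDiff_eq_of_mul_eq hij (by rw [Kswap_C]; ring)

theorem divDiff_X_left (hij : i ≠ j) : divDiff i j (X i : Pol) = 1 :=
  divDiff_eq_of_mul_eq hij (by rw [Kswap_X, Equiv.swap_apply_left]; ring)

theorem divDiff_X_right (hij : i ≠ j) : divDiff i j (X j : Pol) = -1 :=
  divDiff_eq_of_mul_eq hij (by rw [Kswap_X, Equiv.swap_apply_right]; ring)

theorem divDiff_X_of_ne (hij : i ≠ j) (hmi : m ≠ i) (hmj : m ≠ j) : divDiff i j (X m : Pol) = 0 :=
  divDiff_eq_of_mul_eq hij (by rw [Kswap_X, Equiv.swap_apply_of_ne_of_ne hmi hmj]; ring)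

theorem rename_divDiff (σ : Equiv.Perm (Fin M)) (hij : i ≠ j) (f : Pol) :
    rename σ (divDiff i j f) = divDiff (σ i) (σ j) (rename σ f) := by
  refine (divDiff_eq_of_mul_eq (σ.injective.ne hij) ?_).symm
  rw [← rename_Kswap, ← map_sub, ← X_sub_X_mul_divDiff, map_mul, map_sub, rename_X, rename_X]

variable (β : F)

theorem nabla_eq_divDiff (i : Fin M) (f : Pol) :
    nabla β i f = pderiv i f + β • ∑ j ∈ univ.erase i, divDiff i j f := rfl

noncomputable def nablaₗ (i : Fin M) : Pol →ₗ[F] Pol where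
  toFun := nabla β i
  map_add' f g := by
    simp only [nabla_eq_divDiff, map_add]
    rw [sum_congr rfl fun j hj => divDiff_add (ne_of_mem_erase hj).symm f g, sum_add_distrib,
      smul_add]
    abel
  map_smul' c f := by
    simp only [nabla_eq_divDiff, (pderiv i).map_smul, RingHom.id_apply, smul_add]
    rw [sum_congr rfl fun j hj => divDiff_smul (ne_of_mem_erase hj).symm c f, ← smul_sum,
      smul_comm β c]

theorem nabla_add (i : Fin M) (f g : Pol) : nabla β i (f + g) = nabla β i f + nabla β i g :=
  map_add (nablaₗ β i) f g

theorem nabla_sub (i : Fin M) (f g : Pol) : nabla β i (f - g) = nabla β i f - nabla β i g :=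
  map_sub (nablaₗ β i) f g

theorem nabla_smul (i : Fin M) (c : F) (f : Pol) : nabla β i (c • f) = c • nabla β i f :=
  map_smul (nablaₗ β i) c f

theorem nabla_sum {ι : Type*} (i : Fin M) (s : Finset ι) (g : ι → Pol) :
    nabla β i (∑ x ∈ s, g x) = ∑ x ∈ s, nabla β i (g x) :=
  map_sum (nablaₗ β i) g s

theorem nabla_C (i : Fin M) (a : F) : nabla β i (C a : Pol) = 0 := by
  rw [nabla_eq_divDiff, pderiv_C, sum_eq_zero fun j hj => divDiff_C (ne_of_mem_erase hj).symm a]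
  simp

theorem nabla_X_mul (i m : Fin M) (g : Pol) :
    nabla β i (X m * g) = X m * nabla β i g + pderiv i (X m) * g
      + β • ∑ j ∈ univ.erase i, divDiff i j (X m) * Kswap i j g := by
  rw [nabla_eq_divDiff, nabla_eq_divDiff, pderiv_mul,
    sum_congr rfl fun j hj => divDiff_mul (ne_of_mem_erase hj).symm (X m) g, sum_add_distrib,
    ← mul_sum]
  simp only [smul_eq_C_mul]
  ring

theorem nabla_X_mul_of_ne (hmi : m ≠ i) (g : Pol) :
    nabla β i (X m * g) = X m * nabla β i g - β • Kswap i m g := by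
  have hm : m ∈ univ.erase i := mem_erase.2 ⟨hmi, mem_univ m⟩
  rw [nabla_X_mul, pderiv_X_of_ne hmi, sum_eq_single_of_mem m hm fun j hj hjm =>
      by rw [divDiff_X_of_ne (ne_of_mem_erase hj).symm hmi hjm.symm, zero_mul],
    divDiff_X_right hmi.symm]
  simp only [zero_mul, add_zero, neg_one_mul, smul_neg, sub_eq_add_neg]

theorem nabla_X_mul_self (i : Fin M) (g : Pol) :
    nabla β i (X i * g) = X i * nabla β i g + g + β • ∑ j ∈ univ.erase i, Kswap i j g := by
  rw [nabla_X_mul, pderiv_X_self, one_mul,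
    sum_congr rfl fun j hj => by rw [divDiff_X_left (ne_of_mem_erase hj).symm, one_mul]]

theorem rename_nabla (σ : Equiv.Perm (Fin M)) (i : Fin M) (f : Pol) :
    rename σ (nabla β i f) = nabla β (σ i) (rename σ f) := by
  rw [nabla_eq_divDiff, nabla_eq_divDiff, map_add, pderiv_rename σ.injective, map_smul, map_sum]
  congr 2
  refine sum_equiv σ (fun j => by simp) fun j hj => ?_
  exact rename_divDiff σ (ne_of_mem_erase hj).symm f

theorem nabla_Kswap (i j m : Fin M) (f : Pol) :
    nabla β m (Kswap i j f) = Kswap i j (nabla β (Equiv.swap i j m) f) := by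
  rw [Kswap, Kswap, rename_nabla, Equiv.swap_apply_self]

theorem nabla_comm_X_self_mul (hij : i ≠ j) (p : Pol)
    (hp : nabla β i (nabla β j p) = nabla β j (nabla β i p)) :
    nabla β i (nabla β j (X i * p)) = nabla β j (nabla β i (X i * p)) := by
  have hj : j ∈ univ.erase i := mem_erase.2 ⟨hij.symm, mem_univ j⟩
  have lhs : nabla β i (nabla β j (X i * p)) = X i * nabla β i (nabla β j p) + nabla β j p
      + β • ∑ m ∈ (univ.erase i).erase j, Kswap i m (nabla β j p) := by
    rw [nabla_X_mul_of_ne β hij p, nabla_sub, nabla_smul, nabla_X_mul_self, Kswap_comm j i,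
      nabla_Kswap β i j i, Equiv.swap_apply_left, ← add_sum_erase _ _ hj]
    module
  have rhs : nabla β j (nabla β i (X i * p)) = X i * nabla β j (nabla β i p) + nabla β j p
      + β • ∑ m ∈ (univ.erase i).erase j, Kswap i m (nabla β j p) := by
    rw [nabla_X_mul_self β i p, nabla_add, nabla_add, nabla_X_mul_of_ne β hij, nabla_smul,
      nabla_sum, ← add_sum_erase _ _ hj, nabla_Kswap β i j j, Equiv.swap_apply_right,
      sum_congr rfl fun m hm => by
        rw [nabla_Kswap β i m j, Equiv.swap_apply_of_ne_of_ne hij.symm (ne_of_mem_erase hm).symm],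
      Kswap_comm j i]
    module
  rw [lhs, rhs, hp]

theorem nabla_comm_X_mul_of_ne (hij : i ≠ j) (hmi : m ≠ i) (hmj : m ≠ j) (p : Pol)
    (hp : nabla β i (nabla β j p) = nabla β j (nabla β i p)) :
    nabla β i (nabla β j (X m * p)) = nabla β j (nabla β i (X m * p)) := by
  rw [nabla_X_mul_of_ne β hmj p, nabla_sub, nabla_smul, nabla_X_mul_of_ne β hmi,
    nabla_Kswap β j m i, Equiv.swap_apply_of_ne_of_ne hij hmi.symm,
    nabla_X_mul_of_ne β hmi p, nabla_sub, nabla_smul, nabla_X_mul_of_ne β hmj,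
    nabla_Kswap β i m j, Equiv.swap_apply_of_ne_of_ne hij.symm hmj.symm, hp]
  module

theorem nabla_comm (hij : i ≠ j) (f : Pol) :
    nabla β i (nabla β j f) = nabla β j (nabla β i f) := by
  induction f using MvPolynomial.induction_on with
  | C a => rw [nabla_C, nabla_C, ← C_0, nabla_C, nabla_C]
  | add p q hp hq => rw [nabla_add, nabla_add, nabla_add, nabla_add, hp, hq]
  | mul_X p m hp =>
    rw [mul_comm]
    by_cases hmi : m = i
    · subst hmi
      exact nabla_comm_X_self_mul β hij p hp
    by_cases hmj : m = j
    · subst hmj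
      exact (nabla_comm_X_self_mul β hij.symm p hp.symm).symm
    exact nabla_comm_X_mul_of_ne β hij hmi hmj p hp

noncomputable def Dopₗ (i : Fin M) : Pol →ₗ[F] Pol :=
  LinearMap.mulLeft F (X i) ∘ₗ nablaₗ β i

theorem Dop_add (i : Fin M) (f g : Pol) : Dop β i (f + g) = Dop β i f + Dop β i g :=
  map_add (Dopₗ β i) f g

theorem Dop_smul (i : Fin M) (c : F) (f : Pol) : Dop β i (c • f) = c • Dop β i f :=
  map_smul (Dopₗ β i) c f

theorem rename_Dop (σ : Equiv.Perm (Fin M)) (i : Fin M) (f : Pol) :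
    rename σ (Dop β i f) = Dop β (σ i) (rename σ f) := by
  rw [Dop, Dop, map_mul, rename_X, rename_nabla]

theorem Kswap_Dop (i j m : Fin M) (f : Pol) :
    Kswap i j (Dop β m f) = Dop β (Equiv.swap i j m) (Kswap i j f) :=
  rename_Dop β _ m f

theorem Kswap_Dop_of_ne (hmi : m ≠ i) (hmj : m ≠ j) (f : Pol) :
    Kswap i j (Dop β m f) = Dop β m (Kswap i j f) := by
  rw [Kswap_Dop, Equiv.swap_apply_of_ne_of_ne hmi hmj]

theorem Dop_comm (hij : i ≠ j) (h : Pol) :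
    Dop β i (Dop β j h) - Dop β j (Dop β i h) = β • Kswap i j (Dop β i h - Dop β j h) := by
  rw [Dop, Dop, Dop, Dop, nabla_X_mul_of_ne β hij.symm, nabla_X_mul_of_ne β hij, Kswap_sub,
    Kswap_mul, Kswap_mul, Kswap_X, Kswap_X, Equiv.swap_apply_left, Equiv.swap_apply_right,
    nabla_comm β hij, Kswap_comm j i]
  simp only [smul_eq_C_mul]
  ring

theorem Dop_comm_of_Kswap_eq (hij : i ≠ j) {h : Pol} (hh : Kswap i j h = h) :
    Dop β i (Dop β j h) - Dop β j (Dop β i h) = β • (Dop β j h - Dop β i h) := by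
  rw [Dop_comm β hij, Kswap_sub, Kswap_Dop, Kswap_Dop, Equiv.swap_apply_left,
    Equiv.swap_apply_right, hh]

noncomputable def DopShiftₗ (c : ℕ) (j : Fin M) : Pol →ₗ[F] Pol :=
  Dopₗ β j + ((c : F) * β) • LinearMap.id

theorem DopShiftₗ_apply (c : ℕ) (j : Fin M) (f : Pol) :
    DopShiftₗ β c j f = Dop β j f + ((c : F) * β) • f := rfl

noncomputable def Dlistₗ : ℕ → List (Fin M) → Pol →ₗ[F] Pol
  | _, [] => LinearMap.id
  | c, j :: L => DopShiftₗ β c j ∘ₗ Dlistₗ (c + 1) L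

theorem Dlistₗ_cons_apply (c : ℕ) (j : Fin M) (L : List (Fin M)) (f : Pol) :
    Dlistₗ β c (j :: L) f = DopShiftₗ β c j (Dlistₗ β (c + 1) L f) := rfl

theorem Dlistₗ_apply (c : ℕ) (L : List (Fin M)) (f : Pol) : Dlistₗ β c L f = Dlist β c L f := by
  induction L generalizing c with
  | nil => rfl
  | cons j L ih => rw [Dlist, ← ih]; rfl

theorem Kswap_DopShiftₗ_of_ne (hmi : m ≠ i) (hmj : m ≠ j) (c : ℕ) (f : Pol) :
    Kswap i j (DopShiftₗ β c m f) = DopShiftₗ β c m (Kswap i j f) := by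
  rw [DopShiftₗ_apply, DopShiftₗ_apply, Kswap_add, Kswap_smul, Kswap_Dop_of_ne β hmi hmj]

theorem Kswap_Dlistₗ {L : List (Fin M)} (hi : i ∉ L) (hj : j ∉ L) (c : ℕ) (f : Pol) :
    Kswap i j (Dlistₗ β c L f) = Dlistₗ β c L (Kswap i j f) := by
  induction L generalizing c with
  | nil => rfl
  | cons m L ih =>
    rw [List.mem_cons, not_or] at hi hj
    rw [Dlistₗ_cons_apply, Dlistₗ_cons_apply,
      Kswap_DopShiftₗ_of_ne β (Ne.symm hi.1) (Ne.symm hj.1), ih hi.2 hj.2]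

noncomputable def exchangeSumₗ (S : Finset (Fin M)) (j : Fin M) : Pol →ₗ[F] Pol :=
  ∑ i ∈ S, ((rename (Equiv.swap i j)).toLinearMap - LinearMap.id)

theorem exchangeSumₗ_apply (S : Finset (Fin M)) (j : Fin M) (f : Pol) :
    exchangeSumₗ S j f = ∑ i ∈ S, (Kswap i j f - f) := by
  simp [exchangeSumₗ, Kswap]

theorem exchangeSumₗ_insert {S : Finset (Fin M)} (hiS : i ∉ S) (j : Fin M) (f : Pol) :
    exchangeSumₗ (insert i S) j f = (Kswap i j f - f) + exchangeSumₗ S j f := by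
  rw [exchangeSumₗ_apply, exchangeSumₗ_apply, sum_insert hiS]

theorem DopShiftₗ_exchangeSumₗ {S : Finset (Fin M)} (hmS : m ∉ S) (hmj : m ≠ j) (c : ℕ)
    (f : Pol) :
    DopShiftₗ β c m (exchangeSumₗ S j f) = exchangeSumₗ S j (DopShiftₗ β c m f) := by
  rw [exchangeSumₗ_apply, exchangeSumₗ_apply, map_sum]
  refine sum_congr rfl fun i hi => ?_
  rw [map_sub, Kswap_DopShiftₗ_of_ne β (ne_of_mem_of_not_mem hi hmS).symm hmj]

theorem Dlistₗ_Dop_sub_Dop_Dlistₗ {L : List (Fin M)} (hL : L.Nodup) (hj : j ∉ L) (c : ℕ)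
    {g : Pol} (hg : ∀ i ∈ L, Kswap i j g = g) :
    Dlistₗ β c L (Dop β j g) - Dop β j (Dlistₗ β c L g)
      = β • exchangeSumₗ L.toFinset j (Dlistₗ β c L g) := by
  induction L generalizing c with
  | nil => simp [Dlistₗ, exchangeSumₗ]
  | cons i L ih =>
    obtain ⟨hiL, hL⟩ := List.nodup_cons.1 hL
    rw [List.mem_cons, not_or] at hj
    have hij : i ≠ j := Ne.symm hj.1
    set Q := DopShiftₗ β c i
    set h := Dlistₗ β (c + 1) L g
    have hh : Kswap i j h = h := by rw [Kswap_Dlistₗ β hiL hj.2, hg i List.mem_cons_self]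
    have ih' : Dlistₗ β (c + 1) L (Dop β j g) = Dop β j h + β • exchangeSumₗ L.toFinset j h := by
      rw [← ih hL hj.2 (c + 1) fun i' hi' => hg i' (List.mem_cons_of_mem _ hi')]
      abel
    have hQ : Q (Dop β j h) - Dop β j (Q h) = β • (Kswap i j (Q h) - Q h) := by
      have hKQ : Kswap i j (Q h) - Q h = Dop β j h - Dop β i h := by
        simp only [Q, DopShiftₗ_apply, Kswap_add, Kswap_smul, Kswap_Dop, Equiv.swap_apply_left, hh]
        abel
      rw [hKQ, ← Dop_comm_of_Kswap_eq β hij hh]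
      simp only [Q, DopShiftₗ_apply, Dop_add, Dop_smul]
      abel
    have hiL' : i ∉ L.toFinset := by simpa using hiL
    rw [Dlistₗ_cons_apply, Dlistₗ_cons_apply, ih', map_add, map_smul,
      DopShiftₗ_exchangeSumₗ β hiL' hij, List.toFinset_cons, exchangeSumₗ_insert hiL', smul_add,
      ← hQ]
    abel

theorem exists_Dlistₗ_commutator_eq {L₀ L : List (Fin M)} (h₀ : L₀.Nodup) (hL : L.Nodup)
    (hdisj : L₀.Disjoint L) (c₀ c : ℕ) :
    ∃ A : Pol →ₗ[F] Pol, ∀ f : Pol, (∀ i ∈ L₀, ∀ j ∈ L, Kswap i j f = f) →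
      Dlistₗ β c₀ L₀ (Dlistₗ β c L f) - Dlistₗ β c L (Dlistₗ β c₀ L₀ f)
        = A (Dlistₗ β c₀ L₀ f) := by
  induction L generalizing c with
  | nil => exact ⟨0, fun f _ => by simp [Dlistₗ]⟩
  | cons j L ih =>
    obtain ⟨hjL, hL⟩ := List.nodup_cons.1 hL
    obtain ⟨hjL₀, hdisj⟩ := List.disjoint_cons_right.1 hdisj
    obtain ⟨A, hA⟩ := ih hL hdisj (c + 1)
    set N := Dlistₗ β c₀ L₀
    set B := Dlistₗ β (c + 1) L
    set Q := DopShiftₗ β c j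
    refine ⟨(β • exchangeSumₗ L₀.toFinset j) ∘ₗ (B + A) + Q ∘ₗ A, fun f hf => ?_⟩
    have hBf : ∀ i ∈ L₀, Kswap i j (B f) = B f := fun i hi => by
      rw [Kswap_Dlistₗ β (fun h => hdisj hi h) hjL, hf i hi j List.mem_cons_self]
    have hNB : N (B f) = B (N f) + A (N f) := by
      rw [← hA f fun i hi j' hj' => hf i hi j' (List.mem_cons_of_mem _ hj')]
      abel
    have hNQ : N (Q (B f)) - Q (N (B f)) = β • exchangeSumₗ L₀.toFinset j (N (B f)) := by
      rw [← Dlistₗ_Dop_sub_Dop_Dlistₗ β h₀ hjL₀ c₀ hBf]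
      simp only [Q, DopShiftₗ_apply, map_add, map_smul]
      abel
    rw [Dlistₗ_cons_apply, Dlistₗ_cons_apply]
    calc N (Q (B f)) - Q (B (N f))
        = (N (Q (B f)) - Q (N (B f))) + Q (A (N f)) := by rw [hNB, map_add]; abel
      _ = β • exchangeSumₗ L₀.toFinset j (B (N f) + A (N f)) + Q (A (N f)) := by rw [hNQ, hNB]

end Dunkl

-- Indices are 0-based: `z_1, …, z_N` are the `x : Fin M` with `x < N`, and `{k+2, …, N}` is
-- `{x | k + 1 ≤ x < N}`.
theorem statement_13_general {F : Type*} [Field F] {M N : ℕ} (β : F) (k l : ℕ)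
    (J : Finset (Fin M))
    (hJsub : J ⊆ Finset.univ.filter (fun x : Fin M => k + 1 ≤ (x : ℕ) ∧ (x : ℕ) < N)) :
    ∃ A : MvPolynomial (Fin M) F →ₗ[F] MvPolynomial (Fin M) F,
      ∀ f : MvPolynomial (Fin M) F,
        SymmOn (Finset.univ.filter (fun x : Fin M => (x : ℕ) < N)) f →
        DJ β 0 (Finset.univ.filter (fun x : Fin M => (x : ℕ) < k + 1)) (DJ β (k + 1 - l) J f)
          - DJ β (k + 1 - l) J
              (DJ β 0 (Finset.univ.filter (fun x : Fin M => (x : ℕ) < k + 1)) f)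
        = A (DJ β 0 (Finset.univ.filter (fun x : Fin M => (x : ℕ) < k + 1)) f) := by
  set S₀ : Finset (Fin M) := univ.filter fun x => (x : ℕ) < k + 1
  have hJ : ∀ j ∈ J, k + 1 ≤ (j : ℕ) ∧ (j : ℕ) < N := fun j hj => (mem_filter.1 (hJsub hj)).2
  have hS₀ : ∀ i ∈ S₀, (i : ℕ) < k + 1 := fun i hi => (mem_filter.1 hi).2
  obtain ⟨A, hA⟩ := exists_Dlistₗ_commutator_eq β (sort_nodup S₀ (· ≤ ·)) (sort_nodup J (· ≤ ·))
    (fun i hi hi' => by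
      have := hS₀ i ((mem_sort _).1 hi)
      have := (hJ i ((mem_sort _).1 hi')).1
      omega) 0 (k + 1 - l)
  refine ⟨A, fun f hf => ?_⟩
  have hKf : ∀ i ∈ S₀.sort (· ≤ ·), ∀ j ∈ J.sort (· ≤ ·), Kswap i j f = f := fun i hi j hj => by
    have hik := hS₀ i ((mem_sort _).1 hi)
    obtain ⟨hjk, hjN⟩ := hJ j ((mem_sort _).1 hj)
    exact hf i (mem_filter.2 ⟨mem_univ i, by omega⟩) j (mem_filter.2 ⟨mem_univ j, hjN⟩)
  simpa only [DJ, Dlistₗ_apply] using hA f hKf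

/-- for `M ≥ N ≥ k+1 ≥ 2` and `J ⊆ {k+2,…,N}` with `|J| = ℓ`, `1 ≤ ℓ ≤ k`,
there is a linear operator `A` with `[Ñ_{k+1}, D_{k+1-ℓ,J}] f = A (Ñ_{k+1} f)` for every
`f` symmetric in `z_1,…,z_N`. (0-indexed: `{k+2,…,N}` is `{x | k+1 ≤ x < N}`.) -/
theorem statement_13 {F : Type*} [Field F] [CharZero F] {M N : ℕ} (β : F) (k l : ℕ)
    (hk : 2 ≤ k + 1) (hkN : k + 1 ≤ N) (hNM : N ≤ M)
    (J : Finset (Fin M))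
    (hJsub : J ⊆ Finset.univ.filter (fun x : Fin M => k + 1 ≤ (x : ℕ) ∧ (x : ℕ) < N))
    (hJcard : J.card = l) (hl1 : 1 ≤ l) (hlk : l ≤ k) :
    ∃ A : MvPolynomial (Fin M) F →ₗ[F] MvPolynomial (Fin M) F,
      ∀ f : MvPolynomial (Fin M) F,
        SymmOn (Finset.univ.filter (fun x : Fin M => (x : ℕ) < N)) f →
        DJ β 0 (Finset.univ.filter (fun x : Fin M => (x : ℕ) < k + 1)) (DJ β (k + 1 - l) J f)
          - DJ β (k + 1 - l) J
              (DJ β 0 (Finset.univ.filter (fun x : Fin M => (x : ℕ) < k + 1)) f)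
        = A (DJ β 0 (Finset.univ.filter (fun x : Fin M => (x : ℕ) < k + 1)) f) :=
  statement_13_general β k l J hJsub
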